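/- Let G be a discrete group and φ : G → ℝ a conditionally negative function with φ(e) = 0 and φ(g) = φ(g⁻¹), and let T_t be the semigroup on the group algebra defined by T_t(λ_g) = e^{−tφ(g)} λ_g. Then for finite linear combinations x = Σ_g a_g λ_g, the gradient form satisfies Γ(x, x) = Σ_{g,h} \bar{a_g} a_h K_φ(g,h) λ_{g⁻¹h} and the iterated gradient form satisfies Γ₂(x, x) = Σ_{g,h} \bar{a_g} a_h K_φ(g,h)² λ_{g⁻¹h}, where K_φ(g,h) = (1/2)(φ(g)+φ(h)−φ(g⁻¹h)). In particular Γ₂ ≥ 0 holds automatically (since K_φ² is positive definite whenever K_φ is). -/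

import Mathlib

/-! Γ and Γ₂ are sesquilinear, so it suffices to evaluate them on `λ_g, λ_h`, where `L` acts
diagonally; the three eigenvalues `φ(g⁻¹h), φ(g), φ(h)` combine into `K_φ(g,h)` resp.
`K_φ(g,h)²`.

For positivity, `K_φ` is the matrix `(D(g,1) + D(1,h) − D(g,h))/2` built from `D(g,h) = φ(g⁻¹h)`.
For `c` of total mass `s`, the `K_φ`-form of `c` is `−1/2` times the `D`-form of `c − s δ₁`, which
has total mass zero, so conditional negativity of `φ` makes `K_φ` positive semidefinite, and the
Schur product theorem passes this on to `K_φ²`. -/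

open Finset MonoidAlgebra

variable {G : Type*} [Group G]

/-- The generator `L(λ_g) = −φ(g) λ_g` of the semigroup `T_t(λ_g) = e^{−tφ(g)} λ_g`
on the group algebra, extended linearly. -/
noncomputable def genL (φ : G → ℝ) (x : MonoidAlgebra ℂ G) : MonoidAlgebra ℂ G :=
  MonoidAlgebra.ofCoeff (x.coeff.sum fun g a => Finsupp.single g ((-(φ g) : ℂ) * a))

/-- The canonical involution `(Σ a_g λ_g)* = Σ conj(a_g) λ_{g⁻¹}` on the group
algebra. -/
noncomputable def gaStar (x : MonoidAlgebra ℂ G) : MonoidAlgebra ℂ G :=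
  MonoidAlgebra.ofCoeff (x.coeff.sum fun g a => Finsupp.single g⁻¹ (starRingEnd ℂ a))

/-- The gradient form `Γ(x,y) = (1/2)[L(x*y) − (Lx*)y − x*(Ly)]` on the group
algebra. -/
noncomputable def gaGamma (φ : G → ℝ) (x y : MonoidAlgebra ℂ G) : MonoidAlgebra ℂ G :=
  (1 / 2 : ℂ) • (genL φ (gaStar x * y) - genL φ (gaStar x) * y - gaStar x * genL φ y)

/-- The iterated gradient form
`Γ₂(x,y) = (1/2)[LΓ(x,y) − Γ(x, Ly) − Γ(Lx, y)]` on the group algebra. -/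
noncomputable def gaGammaTwo (φ : G → ℝ) (x y : MonoidAlgebra ℂ G) : MonoidAlgebra ℂ G :=
  (1 / 2 : ℂ) • (genL φ (gaGamma φ x y) - gaGamma φ x (genL φ y) - gaGamma φ (genL φ x) y)

/-- The Gromov form `K_φ(g,h) = (1/2)(φ(g) + φ(h) − φ(g⁻¹h))`. -/
noncomputable def gromovK (φ : G → ℝ) (g h : G) : ℝ := (φ g + φ h - φ (g⁻¹ * h)) / 2

lemma MonoidAlgebra.eq_sum_sum_single {k M N : Type*} [Semiring k] [AddCommGroup N]
    (F : MonoidAlgebra k M → MonoidAlgebra k M → N)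
    (hl : ∀ x x' y, F (x + x') y = F x y + F x' y) (hr : ∀ x y y', F x (y + y') = F x y + F x y')
    (x y : MonoidAlgebra k M) :
    F x y = ∑ g ∈ x.coeff.support, ∑ h ∈ y.coeff.support,
      F (single g (x.coeff g)) (single h (y.coeff h)) := by
  conv_lhs => rw [← sum_coeff_single x, ← sum_coeff_single y]
  rw [Finsupp.sum, Finsupp.sum]
  refine (map_sum (AddMonoidHom.mk' (F · _) (hl · · _)) _ _).trans ?_
  exact Finset.sum_congr rfl fun g _ ↦ map_sum (AddMonoidHom.mk' (F _) (hr _)) _ _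

lemma genL_single {M : Type*} (φ : M → ℝ) (g : M) (a : ℂ) :
    genL φ (single g a) = single g (-(φ g : ℂ) * a) := by
  rw [genL, coeff_single, Finsupp.sum_single_index (by simp), ofCoeff_single]

lemma genL_add {M : Type*} (φ : M → ℝ) (x y : MonoidAlgebra ℂ M) :
    genL φ (x + y) = genL φ x + genL φ y := by
  rw [genL, genL, genL, coeff_add,
    Finsupp.sum_add_index' (by simp) (fun _ _ _ ↦ by rw [mul_add, Finsupp.single_add]),
    ofCoeff_add]

lemma gaStar_single (g : G) (a : ℂ) :
    gaStar (single g a : MonoidAlgebra ℂ G) = single g⁻¹ (starRingEnd ℂ a) := by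
  rw [gaStar, coeff_single, Finsupp.sum_single_index (by simp), ofCoeff_single]

lemma gaStar_add (x y : MonoidAlgebra ℂ G) : gaStar (x + y) = gaStar x + gaStar y := by
  rw [gaStar, gaStar, gaStar, coeff_add,
    Finsupp.sum_add_index' (by simp) (fun _ _ _ ↦ by rw [map_add, Finsupp.single_add]),
    ofCoeff_add]

section GradientForms

variable (φ : G → ℝ)

lemma gaGamma_add_left (x x' y : MonoidAlgebra ℂ G) :
    gaGamma φ (x + x') y = gaGamma φ x y + gaGamma φ x' y := by
  simp only [gaGamma, gaStar_add, add_mul, genL_add, ← smul_add]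
  module

lemma gaGamma_add_right (x y y' : MonoidAlgebra ℂ G) :
    gaGamma φ x (y + y') = gaGamma φ x y + gaGamma φ x y' := by
  simp only [gaGamma, mul_add, genL_add, ← smul_add]
  module

lemma gaGammaTwo_add_left (x x' y : MonoidAlgebra ℂ G) :
    gaGammaTwo φ (x + x') y = gaGammaTwo φ x y + gaGammaTwo φ x' y := by
  simp only [gaGammaTwo, gaGamma_add_left, genL_add, ← smul_add]
  module

lemma gaGammaTwo_add_right (x y y' : MonoidAlgebra ℂ G) :
    gaGammaTwo φ x (y + y') = gaGammaTwo φ x y + gaGammaTwo φ x y' := by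
  simp only [gaGammaTwo, gaGamma_add_right, genL_add, ← smul_add]
  module

variable {φ}

lemma gaGamma_single (hφinv : ∀ g : G, φ g⁻¹ = φ g) (g h : G) (a b : ℂ) :
    gaGamma φ (single g a) (single h b)
      = single (g⁻¹ * h) (starRingEnd ℂ a * b * (gromovK φ g h : ℂ)) := by
  simp only [gaGamma, gaStar_single, single_mul_single, genL_single, ← single_sub, smul_single,
    gromovK, hφinv, smul_eq_mul]
  congr 1
  push_cast
  ring

lemma gaGammaTwo_single (hφinv : ∀ g : G, φ g⁻¹ = φ g) (g h : G) (a b : ℂ) :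
    gaGammaTwo φ (single g a) (single h b)
      = single (g⁻¹ * h) (starRingEnd ℂ a * b * (gromovK φ g h : ℂ) ^ 2) := by
  simp only [gaGammaTwo, gaGamma_single hφinv, genL_single, ← single_sub, smul_single,
    map_mul, map_neg, Complex.conj_ofReal, smul_eq_mul]
  congr 1
  simp only [gromovK]
  push_cast
  ring

end GradientForms

lemma eq_sum_sum_smul_of_biadditive
    {F : MonoidAlgebra ℂ G → MonoidAlgebra ℂ G → MonoidAlgebra ℂ G}
    (hl : ∀ x x' y, F (x + x') y = F x y + F x' y) (hr : ∀ x y y', F x (y + y') = F x y + F x y')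
    (w : G → G → ℂ)
    (hF : ∀ g h a b, F (single g a) (single h b) = single (g⁻¹ * h) (starRingEnd ℂ a * b * w g h))
    (x y : MonoidAlgebra ℂ G) :
    F x y = ∑ g ∈ x.coeff.support, ∑ h ∈ y.coeff.support,
      (starRingEnd ℂ (x.coeff g) * y.coeff h * w g h) • of ℂ G (g⁻¹ * h) := by
  simp only [MonoidAlgebra.eq_sum_sum_single F hl hr x y, hF, of_apply, smul_single, smul_eq_mul,
    mul_one]

namespace Matrix

variable {ι R : Type*}

section Sesq

variable [CommRing R] [StarRing R]

def sesqForm (M : Matrix ι ι R) (u v : ι →₀ R) : R :=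
  u.sum fun i x ↦ v.sum fun j y ↦ star x * M i j * y

variable (M : Matrix ι ι R)

lemma sesqForm_sub_left (u u' v : ι →₀ R) :
    sesqForm M (u - u') v = sesqForm M u v - sesqForm M u' v :=
  Finsupp.sum_sub_index fun _ _ _ ↦ by simp only [star_sub, sub_mul, Finsupp.sum_sub]

lemma sesqForm_sub_right (u v v' : ι →₀ R) :
    sesqForm M u (v - v') = sesqForm M u v - sesqForm M u v' := by
  simp only [sesqForm, ← Finsupp.sum_sub]
  exact Finsupp.sum_congr fun _ _ ↦ Finsupp.sum_sub_index fun _ _ _ ↦ mul_sub _ _ _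

lemma sesqForm_single_left (o : ι) (s : R) (v : ι →₀ R) :
    sesqForm M (Finsupp.single o s) v = star s * v.sum fun j y ↦ M o j * y := by
  rw [sesqForm, Finsupp.sum_single_index (by simp), Finsupp.mul_sum]
  simp only [mul_assoc]

lemma sesqForm_single_right (u : ι →₀ R) (o : ι) (s : R) :
    sesqForm M u (Finsupp.single o s) = (u.sum fun i x ↦ star x * M i o) * s := by
  simp only [sesqForm, Finsupp.sum_single_index, mul_zero, Finsupp.sum_mul]

lemma star_sesqForm (u v : ι →₀ R) : star (sesqForm M u v) = sesqForm Mᴴ v u := by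
  simp only [sesqForm, Finsupp.sum, star_sum, conjTranspose_apply, star_mul', star_star]
  rw [Finset.sum_comm]
  exact Finset.sum_congr rfl fun _ _ ↦ Finset.sum_congr rfl fun _ _ ↦ by ring

end Sesq

def gromovMatrix [Field R] (D : Matrix ι ι R) (o : ι) : Matrix ι ι R :=
  of fun i j ↦ (D i o + D o j - D i j) / 2

lemma sesqForm_gromovMatrix [Field R] [StarRing R] {D : Matrix ι ι R} {o : ι} (hDo : D o o = 0)
    (c : ι →₀ R) :
    sesqForm (gromovMatrix D o) c c
      = -sesqForm D (c - Finsupp.single o (c.sum fun _ y ↦ y))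
          (c - Finsupp.single o (c.sum fun _ y ↦ y)) / 2 := by
  set s := c.sum fun _ y ↦ y
  have hK : sesqForm (gromovMatrix D o) c c
      = ((c.sum fun i x ↦ star x * D i o) * s + star s * (c.sum fun j y ↦ D o j * y)
          - sesqForm D c c) / 2 := by
    simp only [sesqForm, gromovMatrix, of_apply, Finsupp.sum, s, star_sum, Finset.sum_mul_sum,
      ← Finset.sum_add_distrib, ← Finset.sum_sub_distrib, Finset.sum_div]
    exact Finset.sum_congr rfl fun _ _ ↦ Finset.sum_congr rfl fun _ _ ↦ by ring
  rw [hK, sesqForm_sub_left, sesqForm_sub_right, sesqForm_sub_right, sesqForm_single_left,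
    sesqForm_single_left, sesqForm_single_right, Finsupp.sum_single_index (by simp), hDo]
  ring

section Complex

open scoped ComplexOrder

lemma IsHermitian.gromovMatrix {D : Matrix ι ι ℂ} (hD : D.IsHermitian) (o : ι) :
    (gromovMatrix D o).IsHermitian := by
  ext i j
  simp only [conjTranspose_apply, Matrix.gromovMatrix, of_apply, star_div₀, star_sub, star_add,
    hD.apply, star_ofNat]
  ring

lemma posSemidef_gromovMatrix {D : Matrix ι ι ℂ} (hD : D.IsHermitian) {o : ι} (hDo : D o o = 0)
    (hcn : ∀ a : ι →₀ ℂ, (a.sum fun _ y ↦ y) = 0 → (sesqForm D a a).re ≤ 0) :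
    (gromovMatrix D o).PosSemidef := by
  refine ⟨hD.gromovMatrix o, fun c ↦ ?_⟩
  change 0 ≤ sesqForm (gromovMatrix D o) c c
  have him : (sesqForm (gromovMatrix D o) c c).im = 0 := by
    rw [← Complex.conj_eq_iff_im, ← Complex.star_def, star_sesqForm, (hD.gromovMatrix o).eq]
  have hmass : ((c - Finsupp.single o (c.sum fun _ y ↦ y)).sum fun _ y ↦ y) = 0 := by
    rw [Finsupp.sum_sub_index fun _ _ _ ↦ rfl, Finsupp.sum_single_index rfl, sub_self]
  refine Complex.le_def.mpr ⟨?_, him.symm⟩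
  rw [sesqForm_gromovMatrix hDo, Complex.div_ofNat_re, Complex.neg_re, Complex.zero_re]
  linarith [hcn _ hmass]

lemma sesqForm_self_eq_sum (M : Matrix ι ι ℂ) (a : ι →₀ ℂ) :
    sesqForm M a a = ∑ i ∈ a.support, ∑ j ∈ a.support, starRingEnd ℂ (a i) * a j * M i j :=
  Finset.sum_congr rfl fun _ _ ↦ Finset.sum_congr rfl fun _ _ ↦ mul_right_comm _ _ _

lemma PosSemidef.re_sum_nonneg {M : Matrix ι ι ℂ} (hM : M.PosSemidef) (a : ι →₀ ℂ) :
    0 ≤ (∑ i ∈ a.support, ∑ j ∈ a.support, starRingEnd ℂ (a i) * a j * M i j).re := by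
  rw [← sesqForm_self_eq_sum]
  exact (Complex.nonneg_iff.mp (hM.2 a)).1

end Complex

end Matrix

section Gromov

variable {φ : G → ℝ}

def kernelMatrix (φ : G → ℝ) : Matrix G G ℂ := Matrix.of fun g h ↦ (φ (g⁻¹ * h) : ℂ)

lemma isHermitian_kernelMatrix (hφinv : ∀ g : G, φ g⁻¹ = φ g) : (kernelMatrix φ).IsHermitian := by
  ext g h
  rw [Matrix.conjTranspose_apply, kernelMatrix, Matrix.of_apply, Matrix.of_apply, Complex.star_def,
    Complex.conj_ofReal, ← hφinv, mul_inv_rev, inv_inv]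

lemma gromovMatrix_kernelMatrix (hφinv : ∀ g : G, φ g⁻¹ = φ g) :
    Matrix.gromovMatrix (kernelMatrix φ) 1 = Matrix.of fun g h ↦ (gromovK φ g h : ℂ) := by
  ext g h
  simp [Matrix.gromovMatrix, kernelMatrix, gromovK, hφinv]

open scoped ComplexOrder in
lemma posSemidef_gromovK (hφe : φ 1 = 0) (hφinv : ∀ g : G, φ g⁻¹ = φ g)
    (hcn : ∀ a : G →₀ ℂ, (∑ g ∈ a.support, a g) = 0 →
      (∑ g ∈ a.support, ∑ h ∈ a.support,
          starRingEnd ℂ (a g) * a h * (φ (g⁻¹ * h) : ℂ)).re ≤ 0) :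
    (Matrix.of fun g h ↦ (gromovK φ g h : ℂ)).PosSemidef := by
  rw [← gromovMatrix_kernelMatrix hφinv]
  refine Matrix.posSemidef_gromovMatrix (isHermitian_kernelMatrix hφinv)
    (by simp [kernelMatrix, hφe]) fun a ha ↦ ?_
  rw [Matrix.sesqForm_self_eq_sum]
  exact hcn a ha

end Gromov

theorem group_algebra_gamma_forms_general (φ : G → ℝ)
    (hφe : φ 1 = 0) (hφinv : ∀ g : G, φ g⁻¹ = φ g)
    (hcn : ∀ a : G →₀ ℂ, (∑ g ∈ a.support, a g) = 0 →
      (∑ g ∈ a.support, ∑ h ∈ a.support,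
          starRingEnd ℂ (a g) * a h * (φ (g⁻¹ * h) : ℂ)).re ≤ 0)
    (x : MonoidAlgebra ℂ G) :
    gaGamma φ x x
        = ∑ g ∈ x.coeff.support, ∑ h ∈ x.coeff.support,
            (starRingEnd ℂ (x.coeff g) * x.coeff h * (gromovK φ g h : ℂ)) •
              MonoidAlgebra.of ℂ G (g⁻¹ * h)
    ∧ gaGammaTwo φ x x
        = ∑ g ∈ x.coeff.support, ∑ h ∈ x.coeff.support,
            (starRingEnd ℂ (x.coeff g) * x.coeff h * ((gromovK φ g h) ^ 2 : ℂ)) •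
              MonoidAlgebra.of ℂ G (g⁻¹ * h)
    ∧ ∀ b : G →₀ ℂ,
        0 ≤ (∑ g ∈ b.support, ∑ h ∈ b.support,
            starRingEnd ℂ (b g) * b h * ((gromovK φ g h) ^ 2 : ℂ)).re := by
  have hK := posSemidef_gromovK hφe hφinv hcn
  refine ⟨eq_sum_sum_smul_of_biadditive (gaGamma_add_left φ) (gaGamma_add_right φ) _
      (gaGamma_single hφinv) x x,
    eq_sum_sum_smul_of_biadditive (gaGammaTwo_add_left φ) (gaGammaTwo_add_right φ) _
      (gaGammaTwo_single hφinv) x x, fun b ↦ ?_⟩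
  simpa only [Matrix.hadamard_apply, Matrix.of_apply, ← sq] using (hK.hadamard hK).re_sum_nonneg b

/-- For a conditionally negative `φ : G → ℝ` with `φ(e) = 0`, `φ(g) = φ(g⁻¹)`, and
the semigroup `T_t(λ_g) = e^{−tφ(g)} λ_g` on the group algebra, for every finite
linear combination `x = Σ_g x_g λ_g` one has
`Γ(x,x) = Σ_{g,h} conj(x_g) x_h K_φ(g,h) λ_{g⁻¹h}` and
`Γ₂(x,x) = Σ_{g,h} conj(x_g) x_h K_φ(g,h)² λ_{g⁻¹h}`; in particular `Γ₂ ≥ 0`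
holds automatically since `K_φ²` is positive definite whenever `K_φ` is. -/
theorem group_algebra_gamma_forms (φ : G → ℝ)
    (hφe : φ 1 = 0) (hφinv : ∀ g : G, φ g⁻¹ = φ g)
    (hcn : ∀ a : G →₀ ℂ, (∑ g ∈ a.support, a g) = 0 →
      (∑ g ∈ a.support, ∑ h ∈ a.support,
          starRingEnd ℂ (a g) * a h * (φ (g⁻¹ * h) : ℂ)).re ≤ 0)
    (T : ℝ → MonoidAlgebra ℂ G →ₗ[ℂ] MonoidAlgebra ℂ G)
    (hT : ∀ t : ℝ, ∀ g : G,
      T t (MonoidAlgebra.of ℂ G g) = (Real.exp (-t * φ g) : ℂ) • MonoidAlgebra.of ℂ G g)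
    (x : MonoidAlgebra ℂ G) :
    gaGamma φ x x
        = ∑ g ∈ x.coeff.support, ∑ h ∈ x.coeff.support,
            (starRingEnd ℂ (x.coeff g) * x.coeff h * (gromovK φ g h : ℂ)) •
              MonoidAlgebra.of ℂ G (g⁻¹ * h)
    ∧ gaGammaTwo φ x x
        = ∑ g ∈ x.coeff.support, ∑ h ∈ x.coeff.support,
            (starRingEnd ℂ (x.coeff g) * x.coeff h * ((gromovK φ g h) ^ 2 : ℂ)) •
              MonoidAlgebra.of ℂ G (g⁻¹ * h)
    ∧ ∀ b : G →₀ ℂ,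
        0 ≤ (∑ g ∈ b.support, ∑ h ∈ b.support,
            starRingEnd ℂ (b g) * b h * ((gromovK φ g h) ^ 2 : ℂ)).re :=
  group_algebra_gamma_forms_general φ hφe hφinv hcn x
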